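/- arXiv:1903.12367 — 4 statements merged into one kernel-verified Lean document; each statement's English description precedes it below -/
import Mathlib

section
/- For c ∈ Cl(η), the right multiplication operator R_c satisfies ĝ(R_c ψ, φ) + ĝ(ψ, R_c φ) = 0 for all ψ, φ ∈ Cl(η) if and only if c lies in the subspace G spanned by the basis elements e_I with |I| ∈ {1,2}. -/
noncomputable section

open CliffordAlgebra

/-- Minkowski space ℝ⁴. -/
abbrev V4 : Type := Fin 4 → ℝ

/-- The Minkowski quadratic form η(x) = −x₀² + x₁² + x₂² + x₃². -/
def η : QuadraticForm ℝ V4 := QuadraticMap.weightedSumSquares ℝ ![(-1 : ℝ), 1, 1, 1]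

/-- The Clifford algebra Cl(η). -/
abbrev Cl : Type := CliffordAlgebra η

/-- Standard basis vectors e₀, e₁, e₂, e₃ of ℝ⁴. -/
def e (i : Fin 4) : V4 := Pi.single i 1

/-- The polar bilinear form B of η : B(v,w) = (η(v+w) − η(v) − η(w))/2. -/
def Bη (v w : V4) : ℝ := (η (v + w) - η v - η w) / 2

/-- γ_v : left multiplication by ι(v). -/
def γ (v : V4) : Module.End ℝ Cl := LinearMap.mulLeft ℝ (ι η v)

/-- R_c : right multiplication by c. -/
def Rc (c : Cl) : Module.End ℝ Cl := LinearMap.mulRight ℝ c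

/-- The basis element e_I = ι(e_{i₁})⋯ι(e_{i_k}) for I = {i₁ < ⋯ < i_k}. -/
def eI (I : Finset (Fin 4)) : Cl := ((I.sort (· ≤ ·)).map (fun i => ι η (e i))).prod

/-- Clifford conjugation: reversal composed with the grade involution. -/
def cconj : Cl →ₗ[ℝ] Cl := reverse ∘ₗ involute.toLinearMap

/-- The extended metric ĝ on Cl(η), relative to a coefficient functional π₀. -/
def ghat (π₀ : Cl →ₗ[ℝ] ℝ) (ψ φ : Cl) : ℝ := -(1/2 : ℝ) * π₀ (cconj ψ * φ + cconj φ * ψ)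

/-- The subspace G ⊆ Cl(η) spanned by the basis elements e_I with |I| ∈ {1,2}. -/
def Gsub : Submodule ℝ Cl :=
  Submodule.span ℝ (eI '' {I : Finset (Fin 4) | I.card = 1 ∨ I.card = 2})


/-! The coefficient `π₀ = b.coord ∅` of `e_∅` is invariant under the algebra automorphisms
`ι(e k) ↦ -ι(e k)` (each `e_I` is an eigenvector with eigenvalue `±1`), so it kills `e_I e_J`
whenever `I ≠ J`: flipping a `k ∈ I ∆ J` negates that product. Hence `π₀` is a trace and the
pairing `π₀ (x * y)` is nondegenerate. Writing `x̄ = cconj x`, the trace property gives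
`ĝ(ψc, φ) + ĝ(ψ, φc) = -½ π₀((c̄ + c)(ψ̄φ + φ̄ψ))`, so `R_c` is skew exactly when `c̄ = -c`.
Finally `e_I` is an eigenvector of conjugation with eigenvalue `(-1)^(k(k+1)/2)`, `k = |I|`,
which is `-1` exactly for `k ∈ {1, 2}`. -/

theorem map_list_prod_map_of_eq_smul {ι M A F : Type*} [CommMonoid M] [Monoid A] [MulAction M A]
    [IsScalarTower M A A] [SMulCommClass M A A] [FunLike F A A] [MonoidHomClass F A A]
    (f : F) {g : ι → A} {s : ι → M} (h : ∀ i, f (g i) = s i • g i) (l : List ι) :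
    f (l.map g).prod = (l.map s).prod • (l.map g).prod := by
  induction l with
  | nil => simp
  | cons a l ih => simp only [List.map_cons, List.prod_cons, map_mul, h, ih, smul_mul_smul_comm]

section Anticommuting

variable (R : Type*) {A : Type*} [CommRing R] [Ring A] [Algebra R A]

theorem List.prod_mul_of_forall_anticomm {l : List A} {a : A}
    (h : ∀ b ∈ l, b * a = -(a * b)) : l.prod * a = (-1 : R) ^ l.length • (a * l.prod) := by
  induction l with
  | nil => simp
  | cons b l ih =>
    rw [List.forall_mem_cons] at h
    rw [List.prod_cons, mul_assoc, ih h.2, mul_smul_comm, ← mul_assoc, h.1, List.length_cons,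
      pow_succ, mul_smul, neg_mul, smul_neg, neg_one_smul, mul_assoc, smul_neg]

theorem List.prod_reverse_of_pairwise_anticomm {l : List A}
    (hl : l.Pairwise fun a b => b * a = -(a * b)) :
    l.reverse.prod = (-1 : R) ^ l.length.choose 2 • l.prod := by
  induction l with
  | nil => simp
  | cons a l ih =>
    rw [List.pairwise_cons] at hl
    rw [List.reverse_cons, List.prod_append, List.prod_singleton, ih hl.2, smul_mul_assoc,
      List.prod_mul_of_forall_anticomm R hl.1, smul_smul, ← pow_add, List.length_cons,
      Nat.choose_succ_succ', Nat.choose_one_right, add_comm, List.prod_cons]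

end Anticommuting

theorem List.prod_map_mul_prod_map_reverse {ι R A : Type*} [CommSemiring R] [Semiring A]
    [Algebra R A] {g : ι → A} {w : ι → R} (h : ∀ i, g i * g i = algebraMap R A (w i))
    (l : List ι) : (l.map g).prod * (l.map g).reverse.prod = algebraMap R A (l.map w).prod := by
  induction l with
  | nil => simp
  | cons a l ih =>
    rw [List.map_cons, List.reverse_cons, List.prod_append, List.prod_cons, List.prod_singleton,
      mul_assoc, ← mul_assoc _ _ (g a), ih, Algebra.commutes, ← mul_assoc, h, List.map_cons,
      List.prod_cons, map_mul]

namespace QuadraticMap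

variable {R ι : Type*} [CommRing R] [Fintype ι] [DecidableEq ι] (w : ι → R)

theorem weightedSumSquares_single (i : ι) : weightedSumSquares R w (Pi.single i 1) = w i := by
  simp [weightedSumSquares_apply, Pi.single_apply]

theorem isOrtho_weightedSumSquares_single {i j : ι} (h : i ≠ j) :
    (weightedSumSquares R w).IsOrtho (Pi.single i 1) (Pi.single j 1) := by
  rw [isOrtho_def, weightedSumSquares_single, weightedSumSquares_single, weightedSumSquares_apply,
    Fintype.sum_eq_add i j h fun k hk => by simp [hk.1, hk.2]]
  simp [h, h.symm]

def weightedSumSquaresDiagonalIsometry (s : ι → R) (hs : ∀ j, s j * s j = 1) :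
    weightedSumSquares R w →qᵢ weightedSumSquares R w where
  toLinearMap := Matrix.toLin' (Matrix.diagonal s)
  map_app' v := by
    change weightedSumSquares R w ((Matrix.diagonal s).mulVec v) = _
    simp only [weightedSumSquares_apply, Matrix.mulVec_diagonal]
    refine Finset.sum_congr rfl fun j _ => ?_
    rw [mul_mul_mul_comm, hs, one_mul]

theorem weightedSumSquaresDiagonalIsometry_single (s : ι → R) (hs : ∀ j, s j * s j = 1) (i : ι) :
    weightedSumSquaresDiagonalIsometry w s hs (Pi.single i 1) = s i • Pi.single i 1 := by
  change (Matrix.diagonal s).mulVec (Pi.single i 1) = _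
  ext j
  rcases eq_or_ne j i with rfl | h <;> simp [Matrix.mulVec_diagonal, *]

end QuadraticMap

open QuadraticMap

theorem η_e (i : Fin 4) : η (e i) = ![(-1 : ℝ), 1, 1, 1] i :=
  weightedSumSquares_single _ i

theorem ι_e_mul_ι_e_self (i : Fin 4) :
    ι η (e i) * ι η (e i) = algebraMap ℝ Cl (![(-1 : ℝ), 1, 1, 1] i) := by
  rw [ι_sq_scalar, η_e]

theorem ι_e_mul_ι_e_anticomm {i j : Fin 4} (h : i ≠ j) :
    ι η (e j) * ι η (e i) = -(ι η (e i) * ι η (e j)) :=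
  eq_neg_of_add_eq_zero_right <|
    ι_mul_ι_add_swap_of_isOrtho (isOrtho_weightedSumSquares_single _ h)

theorem eI_eq_prod_map_ι (I : Finset (Fin 4)) :
    eI I = (((I.sort (· ≤ ·)).map e).map (ι η)).prod := by
  rw [eI, List.map_map]; rfl

theorem eI_empty : eI ∅ = 1 := by simp [eI]

theorem involute_eI (I : Finset (Fin 4)) : involute (eI I) = (-1 : ℝ) ^ I.card • eI I := by
  rw [eI_eq_prod_map_ι, involute_prod_map_ι, List.length_map, Finset.length_sort]

theorem reverse_eI_eq_prod_reverse (I : Finset (Fin 4)) :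
    reverse (eI I) = ((I.sort (· ≤ ·)).map fun i => ι η (e i)).reverse.prod := by
  rw [eI_eq_prod_map_ι, reverse_prod_map_ι, List.map_map]; rfl

theorem reverse_eI (I : Finset (Fin 4)) :
    reverse (eI I) = (-1 : ℝ) ^ I.card.choose 2 • eI I := by
  rw [reverse_eI_eq_prod_reverse, List.prod_reverse_of_pairwise_anticomm ℝ, List.length_map,
    Finset.length_sort, eI]
  rw [List.pairwise_map]
  exact (Finset.sort_nodup I _).imp ι_e_mul_ι_e_anticomm

theorem cconj_eI (I : Finset (Fin 4)) :
    cconj (eI I) = (-1 : ℝ) ^ (I.card + 1).choose 2 • eI I := by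
  rw [cconj, LinearMap.comp_apply, AlgHom.toLinearMap_apply, involute_eI, map_smul, reverse_eI,
    smul_smul, ← pow_add, Nat.choose_succ_succ', Nat.choose_one_right]

theorem cconj_eI_eq_ite (I : Finset (Fin 4)) :
    cconj (eI I) = if I.card = 1 ∨ I.card = 2 then -eI I else eI I := by
  have hI : I.card ≤ 4 := I.card_le_univ.trans_eq (Fintype.card_fin 4)
  rw [cconj_eI]
  interval_cases I.card <;> norm_num [Nat.choose]

theorem eI_mul_reverse_eI (I : Finset (Fin 4)) :
    eI I * reverse (eI I) = algebraMap ℝ Cl (∏ i ∈ I, ![(-1 : ℝ), 1, 1, 1] i) := by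
  rw [reverse_eI_eq_prod_reverse, eI, List.prod_map_mul_prod_map_reverse ι_e_mul_ι_e_self,
    ← List.prod_toFinset _ (Finset.sort_nodup _ _), Finset.sort_toFinset]

theorem Pi.mulSingle_neg_one_mul_self {ι R : Type*} [DecidableEq ι] [Ring R] (k j : ι) :
    (Pi.mulSingle k (-1) : ι → R) j * (Pi.mulSingle k (-1) : ι → R) j = 1 := by
  rcases eq_or_ne j k with rfl | h <;> simp [*]

def signFlip (k : Fin 4) : Cl →ₐ[ℝ] Cl :=
  map (weightedSumSquaresDiagonalIsometry _ _ (Pi.mulSingle_neg_one_mul_self k) : η →qᵢ η)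

theorem signFlip_ι_e (k i : Fin 4) :
    signFlip k (ι η (e i)) = (Pi.mulSingle k (-1) : Fin 4 → ℝ) i • ι η (e i) :=
  (map_apply_ι _ (e i)).trans <|
    (congrArg (ι η) (weightedSumSquaresDiagonalIsometry_single _ _ _ i)).trans (map_smul _ _ _)

theorem signFlip_eI (k : Fin 4) (I : Finset (Fin 4)) :
    signFlip k (eI I) = (if k ∈ I then -1 else 1 : ℝ) • eI I := by
  rw [eI, map_list_prod_map_of_eq_smul _ (signFlip_ι_e k),
    ← List.prod_toFinset _ (Finset.sort_nodup _ _), Finset.sort_toFinset, Finset.prod_pi_mulSingle']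

theorem cconj_mul (x y : Cl) : cconj (x * y) = cconj y * cconj x := by
  simp only [cconj, LinearMap.comp_apply, AlgHom.toLinearMap_apply, map_mul, reverse.map_mul]

theorem cconj_one : cconj (1 : Cl) = 1 := by
  simp only [cconj, LinearMap.comp_apply, AlgHom.toLinearMap_apply, map_one, reverse.map_one]

theorem cconj_cconj (x : Cl) : cconj (cconj x) = x := by
  simp only [cconj, LinearMap.comp_apply, AlgHom.toLinearMap_apply, ← reverse_involute,
    reverse_reverse, involute_involute]

theorem mem_Gsub_iff (b : Module.Basis (Finset (Fin 4)) ℝ Cl) (hb : ∀ I, b I = eI I) (c : Cl) :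
    c ∈ Gsub ↔ cconj c = -c := by
  constructor
  · intro hc
    induction hc using Submodule.span_induction with
    | mem x hx =>
      obtain ⟨I, hI, rfl⟩ := hx
      exact (cconj_eI_eq_ite I).trans (if_pos hI)
    | zero => rw [map_zero, neg_zero]
    | add x y _ _ hx hy => rw [map_add, hx, hy, neg_add]
    | smul a x _ hx => rw [map_smul, hx, smul_neg]
  · intro hc
    have hP : ∀ I, (1 / 2 : ℝ) • (eI I - cconj (eI I)) ∈ Gsub := fun I => by
      rw [cconj_eI_eq_ite]
      split_ifs with hI
      · rw [sub_neg_eq_add, ← two_smul ℝ, smul_smul]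
        norm_num
        exact Submodule.subset_span ⟨I, hI, rfl⟩
      · rw [sub_self, smul_zero]
        exact Gsub.zero_mem
    have : (1 / 2 : ℝ) • (c - cconj c) ∈ Gsub := by
      rw [← b.sum_repr c, map_sum, ← Finset.sum_sub_distrib, Finset.smul_sum]
      refine Gsub.sum_mem fun I _ => ?_
      rw [map_smul, ← smul_sub, smul_comm, hb]
      exact Gsub.smul_mem _ (hP I)
    rwa [hc, sub_neg_eq_add, ← two_smul ℝ, smul_smul, one_div, inv_mul_cancel₀ two_ne_zero,
      one_smul] at this

theorem ghat_mul_right_add_ghat_mul_right {π : Cl →ₗ[ℝ] ℝ} (hπ : ∀ x y, π (x * y) = π (y * x))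
    (c ψ φ : Cl) : ghat π (ψ * c) φ + ghat π ψ (φ * c) =
      -(1 / 2) * π ((cconj c + c) * (cconj ψ * φ + cconj φ * ψ)) := by
  simp only [ghat, cconj_mul, hπ _ c, mul_add, add_mul, map_add, ← mul_assoc]
  ring

section CoordEmpty

variable (b : Module.Basis (Finset (Fin 4)) ℝ Cl) (hb : ∀ I, b I = eI I)
include hb

theorem coord_empty_eI (I : Finset (Fin 4)) : b.coord ∅ (eI I) = if I = ∅ then 1 else 0 := by
  rw [← hb, Module.Basis.coord_apply, Module.Basis.repr_self, Finsupp.single_apply, eq_comm]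

theorem coord_empty_algebraMap (r : ℝ) : b.coord ∅ (algebraMap ℝ Cl r) = r := by
  rw [Algebra.algebraMap_eq_smul_one, map_smul, ← eI_empty, coord_empty_eI b hb, if_pos rfl,
    smul_eq_mul, mul_one]

theorem coord_empty_signFlip (k : Fin 4) (x : Cl) : b.coord ∅ (signFlip k x) = b.coord ∅ x := by
  suffices b.coord ∅ ∘ₗ (signFlip k).toLinearMap = b.coord ∅ from LinearMap.congr_fun this x
  refine b.ext fun I => ?_
  rw [LinearMap.comp_apply, AlgHom.toLinearMap_apply, hb, signFlip_eI, map_smul,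
    coord_empty_eI b hb]
  rcases eq_or_ne I ∅ with rfl | hI <;> simp [*]

theorem coord_empty_cconj (x : Cl) : b.coord ∅ (cconj x) = b.coord ∅ x := by
  suffices b.coord ∅ ∘ₗ cconj = b.coord ∅ from LinearMap.congr_fun this x
  refine b.ext fun I => ?_
  rw [LinearMap.comp_apply, hb, cconj_eI, map_smul, coord_empty_eI b hb]
  rcases eq_or_ne I ∅ with rfl | hI <;> simp [*]

theorem coord_empty_eI_mul_eI_of_ne {I J : Finset (Fin 4)} (h : I ≠ J) :
    b.coord ∅ (eI I * eI J) = 0 := by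
  obtain ⟨k, hk⟩ : ∃ k, ¬(k ∈ I ↔ k ∈ J) := by simpa [Finset.ext_iff] using h
  have hflip : signFlip k (eI I * eI J) = -(eI I * eI J) := by
    rw [map_mul, signFlip_eI, signFlip_eI, smul_mul_smul_comm]
    by_cases hI : k ∈ I <;> simp_all
  have := coord_empty_signFlip b hb k (eI I * eI J)
  rw [hflip, map_neg] at this
  linarith

theorem coord_empty_eI_mul_eI_self_ne_zero (I : Finset (Fin 4)) :
    b.coord ∅ (eI I * eI I) ≠ 0 := by
  have hprod : ∏ i ∈ I, ![(-1 : ℝ), 1, 1, 1] i ≠ 0 :=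
    Finset.prod_ne_zero_iff.2 fun i _ => by fin_cases i <;> norm_num
  have h := coord_empty_algebraMap b hb (∏ i ∈ I, ![(-1 : ℝ), 1, 1, 1] i)
  rw [← eI_mul_reverse_eI, reverse_eI, mul_smul_comm, map_smul] at h
  exact right_ne_zero_of_smul (h ▸ hprod)

theorem coord_empty_mul_comm (x y : Cl) : b.coord ∅ (x * y) = b.coord ∅ (y * x) := by
  suffices (LinearMap.mul ℝ Cl).compr₂ (b.coord ∅) = ((LinearMap.mul ℝ Cl).compr₂ (b.coord ∅)).flip
    from LinearMap.congr_fun₂ this x y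
  refine b.ext fun I => b.ext fun J => ?_
  simp only [LinearMap.compr₂_apply, LinearMap.mul_apply', LinearMap.flip_apply, hb]
  rcases eq_or_ne I J with rfl | h
  · rfl
  · rw [coord_empty_eI_mul_eI_of_ne b hb h, coord_empty_eI_mul_eI_of_ne b hb h.symm]

theorem coord_empty_mul_eI (x : Cl) (J : Finset (Fin 4)) :
    b.coord ∅ (x * eI J) = b.coord J x * b.coord ∅ (eI J * eI J) := by
  conv_lhs => rw [← b.sum_repr x]
  rw [Finset.sum_mul, map_sum, Finset.sum_eq_single_of_mem J (Finset.mem_univ J)]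
  · rw [smul_mul_assoc, map_smul, hb, smul_eq_mul]
    rfl
  · intro I _ hIJ
    rw [smul_mul_assoc, map_smul, hb, coord_empty_eI_mul_eI_of_ne b hb hIJ, smul_zero]

theorem eq_zero_of_forall_coord_empty_mul_eq_zero {x : Cl} (h : ∀ y, b.coord ∅ (x * y) = 0) :
    x = 0 := by
  refine b.forall_coord_eq_zero_iff.1 fun J => ?_
  have hJ := h (eI J)
  rw [coord_empty_mul_eI b hb, mul_eq_zero] at hJ
  exact hJ.resolve_right (coord_empty_eI_mul_eI_self_ne_zero b hb J)

end CoordEmpty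

/-- R_c is anti-self-adjoint for ĝ iff c lies in the span G of the
basis elements e_I with |I| ∈ {1,2}. -/
theorem stmt5 (b : Module.Basis (Finset (Fin 4)) ℝ Cl) (hb : ∀ I, b I = eI I) (c : Cl) :
    (∀ ψ φ : Cl, ghat (b.coord ∅) (ψ * c) φ + ghat (b.coord ∅) ψ (φ * c) = 0) ↔ c ∈ Gsub := by
  simp only [ghat_mul_right_add_ghat_mul_right (coord_empty_mul_comm b hb), mem_Gsub_iff b hb,
    mul_eq_zero, neg_eq_zero, one_div, inv_eq_zero, OfNat.ofNat_ne_zero, false_or]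
  set π₀ := b.coord ∅
  constructor
  · intro H
    set d := cconj c + c
    have hd : cconj d = d := by rw [map_add, cconj_cconj, add_comm]
    have key : ∀ φ, π₀ (d * φ) = 0 := fun φ => by
      have hφ : π₀ (d * cconj φ) = π₀ (d * φ) := by
        rw [← coord_empty_cconj b hb, cconj_mul, cconj_cconj, hd, coord_empty_mul_comm b hb]
      have := H 1 φ
      rw [cconj_one, mul_one, one_mul, mul_add, map_add, hφ] at this
      linarith
    exact eq_neg_of_add_eq_zero_left (eq_zero_of_forall_coord_empty_mul_eq_zero b hb key)
  · intro hc ψ φ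
    rw [hc, neg_add_cancel, zero_mul, map_zero]
end
end

section
/- If θ is a force tensor and f is a linear isometry of (ℝ⁴, η), then f·θ is again a force tensor; i.e., for each α the endomorphism (f·θ)_α commutes with γ_v for every v ∈ ℝ⁴ and satisfies ĝ((f·θ)_α ψ, φ) + ĝ(ψ, (f·θ)_α φ) = 0 for all ψ, φ. -/
noncomputable section

open CliffordAlgebra

/-- A force tensor: a quadruple of endomorphisms of Cl(η), each commuting with all the
gamma matrices and anti-self-adjoint with respect to ĝ. -/
def IsForceTensor (π₀ : Cl →ₗ[ℝ] ℝ) (θ : Fin 4 → Module.End ℝ Cl) : Prop :=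
  ∀ α : Fin 4, (∀ v : V4, θ α ∘ₗ γ v = γ v ∘ₗ θ α) ∧
    ∀ ψ φ : Cl, ghat π₀ (θ α ψ) φ + ghat π₀ ψ (θ α φ) = 0

/-- The algebra automorphism f̂ of Cl(η) induced by a linear isometry f of (ℝ⁴,η). -/
def hatAut (f : V4 ≃ₗ[ℝ] V4) (hf : ∀ v, η (f v) = η v) : Cl →ₐ[ℝ] Cl :=
  CliffordAlgebra.lift η ⟨(ι η) ∘ₗ (f : V4 →ₗ[ℝ] V4), fun v => by
    simp only [LinearMap.comp_apply, LinearEquiv.coe_coe, ι_sq_scalar, hf]⟩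

lemma isometry_symm (f : V4 ≃ₗ[ℝ] V4) (hf : ∀ v, η (f v) = η v) :
    ∀ v, η (f.symm v) = η v := fun v => by
  have h := hf (f.symm v)
  rw [f.apply_symm_apply] at h
  exact h.symm

/-- The action of a linear isometry f on a quadruple θ of endomorphisms of Cl(η):
(f·θ)_α = Σ_β c_{βα} • (f̂ ∘ θ_β ∘ f̂⁻¹), where f⁻¹(e_α) = Σ_β c_{βα} e_β. -/
def act (f : V4 ≃ₗ[ℝ] V4) (hf : ∀ v, η (f v) = η v)
    (θ : Fin 4 → Module.End ℝ Cl) : Fin 4 → Module.End ℝ Cl :=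
  fun α => ∑ β : Fin 4, f.symm (e α) β •
    ((hatAut f hf).toLinearMap ∘ₗ θ β ∘ₗ (hatAut f.symm (isometry_symm f hf)).toLinearMap)


/-!
The automorphism `f̂` of `Cl(η)` turns conjugation `T ↦ f̂ ∘ T ∘ f̂⁻¹` into an algebra
automorphism of `End(Cl)` sending `γ_{f⁻¹ v}` to `γ_v`, so it preserves commutation with the
gamma matrices. It also preserves `ĝ`: `f̂` commutes with reversal and grade involution, and
`π₀` is invariant under every algebra automorphism because `16 π₀(x) = tr(L_x)`. The latter
holds since each `e_I` with `I ≠ ∅` anticommutes with some invertible `e_j` (in even dimension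
one can always find `j` with `|I ∖ {j}|` odd), which forces `tr(L_{e_I}) = 0`. Both defining
conditions of a force tensor are linear, so they pass to the combination `(f·θ)_α`.
-/

open Finset

section

variable {R A : Type*} [CommRing R] [Ring A] [Algebra R A]

theorem trace_mulLeft_algEquiv [Module.Free R A] [Module.Finite R A] (σ : A ≃ₐ[R] A) (x : A) :
    LinearMap.trace R A (LinearMap.mulLeft R (σ x)) =
      LinearMap.trace R A (LinearMap.mulLeft R x) := by
  have hconj : LinearMap.mulLeft R (σ x) = σ.toLinearEquiv.conj (LinearMap.mulLeft R x) := by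
    ext y
    simp
  rw [hconj, LinearMap.trace_conj']

theorem trace_mulLeft_eq_zero_of_mul_eq_neg_mul [NoZeroDivisors R] [CharZero R] {u x : A}
    (hu : IsUnit u) (h : u * x = -(x * u)) :
    LinearMap.trace R A (LinearMap.mulLeft R x) = 0 := by
  obtain ⟨u, rfl⟩ := hu
  have hconj : u * x * ↑u⁻¹ = -x := by rw [h, neg_mul, mul_assoc, u.mul_inv, mul_one]
  refine self_eq_neg.mp ?_
  calc LinearMap.trace R A (LinearMap.mulLeft R x)
      = LinearMap.trace R A (LinearMap.mulLeft R ↑u⁻¹ * LinearMap.mulLeft R (u * x)) := by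
        rw [Module.End.mul_eq_comp, ← LinearMap.mulLeft_mul, ← mul_assoc, u.inv_mul, one_mul]
    _ = LinearMap.trace R A (LinearMap.mulLeft R (u * x) * LinearMap.mulLeft R ↑u⁻¹) :=
        LinearMap.trace_mul_comm _ _ _
    _ = -LinearMap.trace R A (LinearMap.mulLeft R x) := by
        rw [Module.End.mul_eq_comp, ← LinearMap.mulLeft_mul, hconj, ← map_neg]
        congr 1
        ext y
        simp

theorem AlgEquiv.commute_conjAlgEquiv_mulLeft (σ : A ≃ₐ[R] A) {T : Module.End R A} {a : A}
    (hT : Commute T (LinearMap.mulLeft R (σ.symm a))) :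
    Commute (σ.toLinearEquiv.conjAlgEquiv R T) (LinearMap.mulLeft R a) := by
  have hconj : σ.toLinearEquiv.conjAlgEquiv R (LinearMap.mulLeft R (σ.symm a)) =
      LinearMap.mulLeft R a := by
    ext y
    simp
  exact hconj ▸ hT.map _

end

theorem LinearEquiv.conjAlgEquiv_mem_skewAdjointSubmodule {R M : Type*} [CommRing R]
    [AddCommGroup M] [Module R M] {B : LinearMap.BilinForm R M} (σ : M ≃ₗ[R] M)
    (hσ : ∀ x y, B (σ x) (σ y) = B x y) {T : Module.End R M}
    (hT : T ∈ B.skewAdjointSubmodule) : σ.conjAlgEquiv R T ∈ B.skewAdjointSubmodule := by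
  rw [LinearMap.mem_skewAdjointSubmodule] at hT ⊢
  intro x y
  simp only [LinearEquiv.conjAlgEquiv_apply, LinearMap.comp_apply, LinearEquiv.coe_coe]
  calc B (σ (T (σ.symm x))) y = B (σ (T (σ.symm x))) (σ (σ.symm y)) := by
        rw [σ.apply_symm_apply]
    _ = B (σ.symm x) (-T (σ.symm y)) := by rw [hσ]; exact hT _ _
    _ = B x (-σ (T (σ.symm y))) := by rw [← hσ, σ.apply_symm_apply, map_neg]

theorem Finset.exists_odd_card_erase {κ : Type*} [Fintype κ] [DecidableEq κ]
    (hκ : Even (Fintype.card κ)) {I : Finset κ} (hI : I.Nonempty) : ∃ j, Odd #(I.erase j) := by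
  rcases Nat.even_or_odd #I with heven | hodd
  · obtain ⟨j, hj⟩ := hI
    refine ⟨j, ?_⟩
    rw [card_erase_of_mem hj]
    exact Nat.Even.sub_odd (card_pos.mpr ⟨j, hj⟩) heven odd_one
  · have hne : I ≠ univ := by
      rintro rfl
      exact Nat.not_even_iff_odd.mpr hodd (card_univ (α := κ) ▸ hκ)
    obtain ⟨j, hj⟩ := not_forall.mp (mt eq_univ_iff_forall.mpr hne)
    exact ⟨j, by rwa [erase_eq_of_notMem hj]⟩

theorem Finset.countP_sort_ne {κ : Type*} [LinearOrder κ] (I : Finset κ) (j : κ) :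
    (I.sort (· ≤ ·)).countP (· ≠ j) = #(I.erase j) := by
  rw [← filter_ne', ← Multiset.coe_countP, sort_eq, Multiset.countP_eq_card_filter]
  rfl

theorem QuadraticMap.weightedSumSquares_single_s9 {R κ : Type*} [CommRing R] [Fintype κ]
    [DecidableEq κ] (w : κ → R) (j : κ) : weightedSumSquares R w (Pi.single j 1) = w j := by
  simp [weightedSumSquares_apply, Pi.single_apply]

theorem QuadraticMap.isOrtho_weightedSumSquares_single_s9 {R κ : Type*} [CommRing R] [Fintype κ]
    [DecidableEq κ] (w : κ → R) {i j : κ} (h : i ≠ j) :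
    (weightedSumSquares R w).IsOrtho (Pi.single i 1) (Pi.single j 1) := by
  simp [isOrtho_def, weightedSumSquares_apply, Pi.single_apply, mul_add,
    Finset.sum_add_distrib, h, Ne.symm h]

section

variable {R M₁ M₂ : Type*} [CommRing R] [AddCommGroup M₁] [AddCommGroup M₂] [Module R M₁]
  [Module R M₂] {Q₁ : QuadraticForm R M₁} {Q₂ : QuadraticForm R M₂}

theorem CliffordAlgebra.involute_map (f : Q₁ →qᵢ Q₂) (x : CliffordAlgebra Q₁) :
    involute (map f x) = map f (involute x) := by
  induction x using CliffordAlgebra.induction with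
  | algebraMap r => simp
  | ι v => simp
  | mul x y hx hy => simp [hx, hy]
  | add x y hx hy => simp [hx, hy]

theorem CliffordAlgebra.reverse_map (f : Q₁ →qᵢ Q₂) (x : CliffordAlgebra Q₁) :
    reverse (map f x) = map f (reverse x) := by
  induction x using CliffordAlgebra.induction with
  | algebraMap r => simp
  | ι v => simp
  | mul x y hx hy => simp [hx, hy]
  | add x y hx hy => simp [hx, hy]

end

theorem CliffordAlgebra.ι_mul_prod_map_ι_of_isOrtho {R M κ : Type*} [CommRing R]
    [AddCommGroup M] [Module R M] {Q : QuadraticForm R M} [DecidableEq κ] {w : κ → M}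
    (horth : ∀ i j, i ≠ j → Q.IsOrtho (w i) (w j)) (j : κ) (l : List κ) :
    ι Q (w j) * (l.map fun i => ι Q (w i)).prod =
      (-1 : R) ^ l.countP (· ≠ j) • ((l.map fun i => ι Q (w i)).prod * ι Q (w j)) := by
  induction l with
  | nil => simp
  | cons i l ih =>
    simp only [List.map_cons, List.prod_cons, List.countP_cons]
    by_cases hij : i = j
    · subst hij
      conv_lhs => rw [ih]
      rw [mul_smul_comm, ← mul_assoc]
      simp
    · rw [ι_mul_ι_mul_of_isOrtho _ (horth j i (Ne.symm hij)), ih]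
      simp [hij, pow_succ, mul_assoc]

theorem isOrtho_η_e {i j : Fin 4} (h : i ≠ j) : η.IsOrtho (e i) (e j) :=
  QuadraticMap.isOrtho_weightedSumSquares_single_s9 _ h

theorem isUnit_η_e (j : Fin 4) : IsUnit (η (e j)) := by
  rw [η, e, QuadraticMap.weightedSumSquares_single_s9]
  fin_cases j <;> simp

theorem exists_ι_e_mul_eI_eq_neg {I : Finset (Fin 4)} (hI : I.Nonempty) :
    ∃ j, ι η (e j) * eI I = -(eI I * ι η (e j)) := by
  obtain ⟨j, hj⟩ := exists_odd_card_erase (by decide : Even (Fintype.card (Fin 4))) hI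
  refine ⟨j, ?_⟩
  rw [eI, ι_mul_prod_map_ι_of_isOrtho (fun _ _ => isOrtho_η_e), countP_sort_ne, hj.neg_one_pow,
    neg_one_smul]

theorem trace_mulLeft_eI {I : Finset (Fin 4)} (hI : I.Nonempty) :
    LinearMap.trace ℝ Cl (LinearMap.mulLeft ℝ (eI I)) = 0 := by
  obtain ⟨j, hj⟩ := exists_ι_e_mul_eI_eq_neg hI
  exact trace_mulLeft_eq_zero_of_mul_eq_neg_mul (isUnit_ι_of_isUnit η (isUnit_η_e j)) hj

theorem trace_mulLeft_eq_coord (b : Module.Basis (Finset (Fin 4)) ℝ Cl) (hb : ∀ I, b I = eI I)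
    (x : Cl) : LinearMap.trace ℝ Cl (LinearMap.mulLeft ℝ x) = 16 * b.coord ∅ x := by
  have : Module.Finite ℝ Cl := .of_basis b
  have key : LinearMap.trace ℝ Cl ∘ₗ LinearMap.mul ℝ Cl = (16 : ℝ) • b.coord ∅ := by
    refine b.ext fun I => ?_
    change LinearMap.trace ℝ Cl (LinearMap.mulLeft ℝ (b I)) = (16 : ℝ) • b.coord ∅ (b I)
    rw [b.coord_apply, b.repr_self]
    rcases I.eq_empty_or_nonempty with rfl | hI
    · have hone : b ∅ = 1 := by simp [hb, eI]
      rw [hone, Finsupp.single_eq_same, LinearMap.mulLeft_one,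
        LinearMap.trace_id, Module.finrank_eq_card_basis b]
      simp
    · rw [Finsupp.single_eq_of_ne hI.ne_empty.symm, hb, smul_zero]
      exact trace_mulLeft_eI hI
  exact LinearMap.congr_fun key x

theorem coord_empty_algEquiv (b : Module.Basis (Finset (Fin 4)) ℝ Cl) (hb : ∀ I, b I = eI I)
    (σ : Cl ≃ₐ[ℝ] Cl) (x : Cl) : b.coord ∅ (σ x) = b.coord ∅ x := by
  have : Module.Finite ℝ Cl := .of_basis b
  have h := trace_mulLeft_algEquiv σ x
  rw [trace_mulLeft_eq_coord b hb, trace_mulLeft_eq_coord b hb] at h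
  linarith

/-- `equivOfIsometry` is built from `CliffordAlgebra.map`, so this is definitionally `hatAut f hf`
with inverse `hatAut f.symm _`. -/
def hatEquiv (f : V4 ≃ₗ[ℝ] V4) (hf : ∀ v, η (f v) = η v) : Cl ≃ₐ[ℝ] Cl :=
  equivOfIsometry { f with map_app' := hf }

theorem cconj_hatEquiv (f : V4 ≃ₗ[ℝ] V4) (hf : ∀ v, η (f v) = η v) (x : Cl) :
    cconj (hatEquiv f hf x) = hatEquiv f hf (cconj x) := by
  simp [hatEquiv, cconj, involute_map, reverse_map]

theorem hatEquiv_symm_ι (f : V4 ≃ₗ[ℝ] V4) (hf : ∀ v, η (f v) = η v) (v : V4) :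
    (hatEquiv f hf).symm (ι η v) = ι η (f.symm v) :=
  map_apply_ι _ v

theorem act_eq_sum_conj (f : V4 ≃ₗ[ℝ] V4) (hf : ∀ v, η (f v) = η v)
    (θ : Fin 4 → Module.End ℝ Cl) (α : Fin 4) :
    act f hf θ α =
      ∑ β, f.symm (e α) β • (hatEquiv f hf).toLinearEquiv.conjAlgEquiv ℝ (θ β) :=
  rfl

def ghatForm (π₀ : Cl →ₗ[ℝ] ℝ) : LinearMap.BilinForm ℝ Cl :=
  LinearMap.mk₂ ℝ (ghat π₀)
    (fun _ _ _ => by simp only [ghat, map_add, add_mul, mul_add]; ring)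
    (fun _ _ _ => by
      simp only [ghat, map_smul, smul_mul_assoc, mul_smul_comm, ← smul_add, smul_eq_mul]; ring)
    (fun _ _ _ => by simp only [ghat, map_add, add_mul, mul_add]; ring)
    (fun _ _ _ => by
      simp only [ghat, map_smul, smul_mul_assoc, mul_smul_comm, ← smul_add, smul_eq_mul]; ring)

theorem ghatForm_apply (π₀ : Cl →ₗ[ℝ] ℝ) (ψ φ : Cl) : ghatForm π₀ ψ φ = ghat π₀ ψ φ :=
  rfl

theorem isForceTensor_iff (π₀ : Cl →ₗ[ℝ] ℝ) (θ : Fin 4 → Module.End ℝ Cl) :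
    IsForceTensor π₀ θ ↔
      ∀ α, (∀ v, Commute (θ α) (γ v)) ∧ θ α ∈ (ghatForm π₀).skewAdjointSubmodule := by
  refine forall_congr' fun α => and_congr Iff.rfl ?_
  simp only [LinearMap.mem_skewAdjointSubmodule, LinearMap.IsSkewAdjoint,
    LinearMap.IsAdjointPair, Pi.neg_apply, map_neg]
  simp only [ghatForm_apply, eq_neg_iff_add_eq_zero]

theorem ghatForm_hatEquiv (b : Module.Basis (Finset (Fin 4)) ℝ Cl) (hb : ∀ I, b I = eI I)
    (f : V4 ≃ₗ[ℝ] V4) (hf : ∀ v, η (f v) = η v) (ψ φ : Cl) :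
    ghatForm (b.coord ∅) (hatEquiv f hf ψ) (hatEquiv f hf φ) = ghatForm (b.coord ∅) ψ φ := by
  simp only [ghatForm_apply, ghat, cconj_hatEquiv, ← map_mul, ← map_add,
    coord_empty_algEquiv b hb]

/-- the action of a linear isometry sends force tensors to force tensors. -/
theorem stmt9 (b : Module.Basis (Finset (Fin 4)) ℝ Cl) (hb : ∀ I, b I = eI I)
    (θ : Fin 4 → Module.End ℝ Cl) (hθ : IsForceTensor (b.coord ∅) θ)
    (f : V4 ≃ₗ[ℝ] V4) (hf : ∀ v, η (f v) = η v) :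
    IsForceTensor (b.coord ∅) (act f hf θ) := by
  rw [isForceTensor_iff] at hθ ⊢
  intro α
  rw [act_eq_sum_conj]
  refine ⟨fun v => Commute.sum_left _ _ _ fun β _ => Commute.smul_left ?_ _,
    Submodule.sum_mem _ fun β _ => Submodule.smul_mem _ _ ?_⟩
  · have hγ : γ (f.symm v) = LinearMap.mulLeft ℝ ((hatEquiv f hf).symm (ι η v)) := by
      rw [hatEquiv_symm_ι, γ]
    exact (hatEquiv f hf).commute_conjAlgEquiv_mulLeft (hγ ▸ (hθ β).1 (f.symm v))
  · exact (hatEquiv f hf).toLinearEquiv.conjAlgEquiv_mem_skewAdjointSubmodule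
      (ghatForm_hatEquiv b hb f hf) (hθ β).2
end
end

section
/- Let Q be a quadratic form on a finite-dimensional real vector space V with polar bilinear form B, and let a : V → V be a linear map that is skew-adjoint with respect to B, i.e. B(a v, w) + B(v, a w) = 0 for all v, w ∈ V. Then there exists a unique ℝ-linear derivation D of the Clifford algebra Cl(Q) (that is, D(x·y) = D(x)·y + x·D(y) for all x, y) such that D(ι v) = ι(a v) for every v ∈ V. -/
/-!
A linear derivation `D` of an algebra `A` is the same as an algebra map `x ↦ x + ε D x` into the
square-zero extension `A[ε]`. By the universal property of `Cl(Q)`, the assignment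
`ι v ↦ ι v + ε ι (a v)` extends to such an algebra map as soon as its square is `Q v`, i.e. as soon
as `ι v` and `ι (a v)` anticommute; skew-adjointness of `a` at `(v, v)` says exactly that `v` and
`a v` are orthogonal. Uniqueness holds because `Cl(Q)` is generated by `ι V`.
-/

open TrivSqZeroExt

theorem LinearMap.map_algebraMap_eq_zero_of_leibniz {R A : Type*} [CommSemiring R] [Ring A]
    [Algebra R A] {D : A →ₗ[R] A} (hD : ∀ x y, D (x * y) = D x * y + x * D y) (r : R) :
    D (algebraMap R A r) = 0 := by
  have h1 : D 1 = 0 := by simpa using hD 1 1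
  rw [Algebra.algebraMap_eq_smul_one, map_smul, h1, smul_zero]

namespace CliffordAlgebra

variable {R M : Type*} [CommRing R] [AddCommGroup M] [Module R M] {Q : QuadraticForm R M}

theorem leibniz_ext {D D' : CliffordAlgebra Q →ₗ[R] CliffordAlgebra Q}
    (hD : ∀ x y, D (x * y) = D x * y + x * D y) (hD' : ∀ x y, D' (x * y) = D' x * y + x * D' y)
    (h : ∀ v, D (ι Q v) = D' (ι Q v)) : D = D' := by
  ext x
  induction x using CliffordAlgebra.induction with
  | algebraMap r =>
    rw [D.map_algebraMap_eq_zero_of_leibniz hD, D'.map_algebraMap_eq_zero_of_leibniz hD']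
  | ι v => exact h v
  | mul x y hx hy => rw [hD, hD', hx, hy]
  | add x y hx hy => rw [map_add, map_add, hx, hy]

variable (d : M →ₗ[R] CliffordAlgebra Q)

def toTrivSqZeroExt (hd : ∀ v, ι Q v * d v + d v * ι Q v = 0) :
    CliffordAlgebra Q →ₐ[R] TrivSqZeroExt (CliffordAlgebra Q) (CliffordAlgebra Q) :=
  lift Q ⟨(inlAlgHom R _ _).toLinearMap ∘ₗ ι Q + (inrHom _ _).restrictScalars R ∘ₗ d, fun v => by
    ext
    · simp [algebraMap_eq_inl']
    · simp [algebraMap_eq_inl', hd v]⟩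

theorem toTrivSqZeroExt_ι (hd : ∀ v, ι Q v * d v + d v * ι Q v = 0) (v : M) :
    toTrivSqZeroExt d hd (ι Q v) = inl (ι Q v) + inr (d v) :=
  lift_ι_apply _ _ v

@[simp]
theorem fst_toTrivSqZeroExt (hd : ∀ v, ι Q v * d v + d v * ι Q v = 0) (x : CliffordAlgebra Q) :
    (toTrivSqZeroExt d hd x).fst = x := by
  suffices (fstHom R _ _).comp (toTrivSqZeroExt d hd) = AlgHom.id R _ from
    AlgHom.congr_fun this x
  ext v
  simp [toTrivSqZeroExt_ι]

def extendDerivation (hd : ∀ v, ι Q v * d v + d v * ι Q v = 0) :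
    CliffordAlgebra Q →ₗ[R] CliffordAlgebra Q :=
  (sndHom _ _).restrictScalars R ∘ₗ (toTrivSqZeroExt d hd).toLinearMap

theorem extendDerivation_ι (hd : ∀ v, ι Q v * d v + d v * ι Q v = 0) (v : M) :
    extendDerivation d hd (ι Q v) = d v := by
  simp [extendDerivation, toTrivSqZeroExt_ι]

theorem extendDerivation_mul (hd : ∀ v, ι Q v * d v + d v * ι Q v = 0) (x y : CliffordAlgebra Q) :
    extendDerivation d hd (x * y) = extendDerivation d hd x * y + x * extendDerivation d hd y := by
  simp [extendDerivation, snd_mul, add_comm]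

theorem existsUnique_leibniz_extension (hd : ∀ v, ι Q v * d v + d v * ι Q v = 0) :
    ∃! D : CliffordAlgebra Q →ₗ[R] CliffordAlgebra Q,
      (∀ x y, D (x * y) = D x * y + x * D y) ∧ ∀ v, D (ι Q v) = d v :=
  ⟨extendDerivation d hd, ⟨extendDerivation_mul d hd, extendDerivation_ι d hd⟩,
    fun _ ⟨hD, hDι⟩ => leibniz_ext hD (extendDerivation_mul d hd) fun v => by
      rw [hDι, extendDerivation_ι]⟩

end CliffordAlgebra

theorem stmt12_general {V : Type*} [AddCommGroup V] [Module ℝ V]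
    (Q : QuadraticForm ℝ V) (a : V →ₗ[ℝ] V)
    (ha : ∀ v w : V,
      (Q (a v + w) - Q (a v) - Q w) / 2 + (Q (v + a w) - Q v - Q (a w)) / 2 = 0) :
    ∃! D : CliffordAlgebra Q →ₗ[ℝ] CliffordAlgebra Q,
      (∀ x y : CliffordAlgebra Q, D (x * y) = D x * y + x * D y) ∧
      ∀ v : V, D (CliffordAlgebra.ι Q v) = CliffordAlgebra.ι Q (a v) := by
  have hortho : ∀ v, Q.IsOrtho v (a v) := fun v => by
    have := ha v v
    rw [add_comm (a v) v] at this
    rw [QuadraticMap.isOrtho_def]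
    linarith
  exact CliffordAlgebra.existsUnique_leibniz_extension ((CliffordAlgebra.ι Q).comp a)
    fun v => CliffordAlgebra.ι_mul_ι_add_swap_of_isOrtho (hortho v)

/-- a linear map skew-adjoint with respect to the polar form of Q extends
uniquely to a derivation of the Clifford algebra Cl(Q). -/
theorem stmt12 {V : Type*} [AddCommGroup V] [Module ℝ V] [FiniteDimensional ℝ V]
    (Q : QuadraticForm ℝ V) (a : V →ₗ[ℝ] V)
    (ha : ∀ v w : V,
      (Q (a v + w) - Q (a v) - Q w) / 2 + (Q (v + a w) - Q v - Q (a w)) / 2 = 0) :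
    ∃! D : CliffordAlgebra Q →ₗ[ℝ] CliffordAlgebra Q,
      (∀ x y : CliffordAlgebra Q, D (x * y) = D x * y + x * D y) ∧
      ∀ v : V, D (CliffordAlgebra.ι Q v) = CliffordAlgebra.ι Q (a v) :=
  stmt12_general Q a ha
end

section
/- The space of Fierz tensors, namely the subspace of all F : {0,1,2,3}³ → ℝ satisfying (i) F(α,σ,ρ) = −F(α,ρ,σ) for all α,ρ,σ, (ii) Σ_{α,ρ} η_{αρ} F(α,ρ,σ) = 0 for each σ, and (iii) Σ_{α,ρ,σ} ε_{αρστ} F(α,ρ,σ) = 0 for each τ, is a real vector space of dimension 16. -/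
/-!
Tensors antisymmetric in their last two slots form a space of dimension 4 · 6 = 24. On it the
trace and ε-conditions together are a linear map onto ℝ⁴ × ℝ⁴: the tensors η_{αρ} v_σ − η_{ασ} v_ρ
have trace 3v and no ε-contraction, while the tensors ε_{αρστ} w^τ are traceless with
ε-contraction 6w. By rank–nullity the Fierz tensors form a space of dimension 24 − 8 = 16.
-/

noncomputable section

/-- Entries of the Minkowski matrix diag(−1,1,1,1). -/
def ηm (α β : Fin 4) : ℝ := if α = β then (if α = 0 then -1 else 1) else 0

/-- The totally antisymmetric symbol on four indices with ε₀₁₂₃ = 1. -/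
def eps (α ρ σ τ : Fin 4) : ℝ :=
  if h : Function.Bijective ![α, ρ, σ, τ] then
    ((Equiv.Perm.sign (Equiv.ofBijective _ h) : ℤ) : ℝ)
  else 0

/-- The Fierz tensor conditions. -/
def IsFierz (F : Fin 4 → Fin 4 → Fin 4 → ℝ) : Prop :=
  (∀ α ρ σ : Fin 4, F α σ ρ = -(F α ρ σ)) ∧
  (∀ σ : Fin 4, ∑ α : Fin 4, ∑ ρ : Fin 4, ηm α ρ * F α ρ σ = 0) ∧
  (∀ τ : Fin 4, ∑ α : Fin 4, ∑ ρ : Fin 4, ∑ σ : Fin 4, eps α ρ σ τ * F α ρ σ = 0)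

open Module Finset

section SkewTensors

variable (K κ ι : Type*) [Field K]

def skewTensors : Submodule K (κ → ι → ι → K) where
  carrier := {F | ∀ a i j, F a j i = -F a i j}
  add_mem' hF hG a i j := by simp [hF a i j, hG a i j, add_comm]
  zero_mem' := by simp
  smul_mem' c F hF a i j := by simp [hF a i j]

variable {K κ ι} [CharZero K]

theorem skewTensors_apply_self {F : κ → ι → ι → K} (hF : F ∈ skewTensors K κ ι) (a : κ) (i : ι) :
    F a i i = 0 :=
  self_eq_neg.mp (hF a i i)

variable [LinearOrder ι]

def skewTensorsEquiv : skewTensors K κ ι ≃ₗ[K] (κ × {p : ι × ι // p.1 < p.2} → K) where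
  toFun F x := F.1 x.1 x.2.1.1 x.2.1.2
  map_add' _ _ := rfl
  map_smul' _ _ := rfl
  invFun c := ⟨fun a i j => if h : i < j then c (a, ⟨(i, j), h⟩)
      else if h' : j < i then -c (a, ⟨(j, i), h'⟩) else 0, by
    intro a i j
    rcases lt_trichotomy i j with h | rfl | h
    · simp [h, h.not_gt]
    · simp
    · simp [h, h.not_gt]⟩
  left_inv F := by
    ext a i j
    rcases lt_trichotomy i j with h | rfl | h
    · simp [h]
    · simp [skewTensors_apply_self F.2]
    · simp [h, h.not_gt, F.2 a j i]
  right_inv c := by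
    ext ⟨a, ⟨i, j⟩, h⟩
    simp [h]

theorem finrank_skewTensors [Fintype κ] [Fintype ι] :
    finrank K (skewTensors K κ ι) = Fintype.card κ * Fintype.card {p : ι × ι // p.1 < p.2} := by
  rw [skewTensorsEquiv.finrank_eq, finrank_fintype_fun_eq_card, Fintype.card_prod]

end SkewTensors

theorem finrank_inf_ker_add_finrank {K V W : Type*} [Field K] [AddCommGroup V] [Module K V]
    [FiniteDimensional K V] [AddCommGroup W] [Module K W] (p : Submodule K V) (f : V →ₗ[K] W)
    (hf : p.map f = ⊤) :
    finrank K ↥(p ⊓ LinearMap.ker f) + finrank K W = finrank K p := by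
  rw [← Submodule.map_comap_subtype, Submodule.finrank_map_subtype_eq, ← LinearMap.ker_domRestrict,
    ← finrank_top K W, ← hf, ← LinearMap.range_domRestrict, add_comm,
    LinearMap.finrank_range_add_finrank_ker]

theorem ηm_of_ne {α ρ : Fin 4} (h : α ≠ ρ) : ηm α ρ = 0 := if_neg h

theorem sum_ηm_mul (α : Fin 4) (f : Fin 4 → ℝ) : ∑ ρ, ηm α ρ * f ρ = ηm α α * f α :=
  Fintype.sum_eq_single α fun _ h => by rw [ηm_of_ne h.symm, zero_mul]

-- An integer-valued copy of `eps`, so that identities about it can be checked by `decide`.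
def leviCivita (α ρ σ τ : Fin 4) : ℤ :=
  if h : Function.Bijective ![α, ρ, σ, τ] then Equiv.Perm.sign (Equiv.ofBijective _ h) else 0

theorem eps_eq_leviCivita (α ρ σ τ : Fin 4) : eps α ρ σ τ = leviCivita α ρ σ τ := by
  unfold eps leviCivita; split_ifs <;> simp

theorem eps_swap (α ρ σ τ : Fin 4) : eps α σ ρ τ = -eps α ρ σ τ := by
  simp only [eps_eq_leviCivita]
  exact_mod_cast (by decide : ∀ α ρ σ τ : Fin 4, leviCivita α σ ρ τ = -leviCivita α ρ σ τ) α ρ σ τ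

theorem eps_apply_self_left (α σ τ : Fin 4) : eps α α σ τ = 0 := by
  simp only [eps_eq_leviCivita]
  exact_mod_cast (by decide : ∀ α σ τ : Fin 4, leviCivita α α σ τ = 0) α σ τ

theorem eps_apply_self_mid (α ρ τ : Fin 4) : eps α ρ α τ = 0 := by
  rw [eps_swap, eps_apply_self_left, neg_zero]

theorem sum_eps_mul_eps (τ κ : Fin 4) :
    ∑ α, ∑ ρ, ∑ σ, eps α ρ σ τ * eps α ρ σ κ = if τ = κ then 6 else 0 := by
  simp only [eps_eq_leviCivita]
  exact_mod_cast (by decide : ∀ τ κ : Fin 4,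
    ∑ α, ∑ ρ, ∑ σ, leviCivita α ρ σ τ * leviCivita α ρ σ κ = if τ = κ then 6 else 0) τ κ

def traceEps : (Fin 4 → Fin 4 → Fin 4 → ℝ) →ₗ[ℝ] (Fin 4 → ℝ) × (Fin 4 → ℝ) where
  toFun F := (fun σ => ∑ α, ∑ ρ, ηm α ρ * F α ρ σ, fun τ => ∑ α, ∑ ρ, ∑ σ, eps α ρ σ τ * F α ρ σ)
  map_add' F G := by ext <;> simp [mul_add, sum_add_distrib]
  map_smul' c F := by ext <;> simp [mul_sum, mul_left_comm c]

theorem setOf_isFierz : {F | IsFierz F} =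
    ((skewTensors ℝ (Fin 4) (Fin 4) ⊓ LinearMap.ker traceEps : Submodule ℝ _) : Set _) := by
  ext F
  simp [IsFierz, skewTensors, traceEps, funext_iff]

def traceTensor (v : Fin 4 → ℝ) (α ρ σ : Fin 4) : ℝ := ηm α ρ * v σ - ηm α σ * v ρ

def epsTensor (w : Fin 4 → ℝ) (α ρ σ : Fin 4) : ℝ := ∑ τ, eps α ρ σ τ * w τ

theorem traceTensor_mem (v : Fin 4 → ℝ) : traceTensor v ∈ skewTensors ℝ (Fin 4) (Fin 4) :=
  fun _ _ _ => by simp only [traceTensor]; ring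

theorem epsTensor_mem (w : Fin 4 → ℝ) : epsTensor w ∈ skewTensors ℝ (Fin 4) (Fin 4) := by
  intro α ρ σ
  simp only [epsTensor, ← sum_neg_distrib, ← neg_mul, eps_swap α ρ σ]

theorem traceEps_traceTensor (v : Fin 4 → ℝ) : traceEps (traceTensor v) = (3 • v, 0) := by
  ext σ
  · fin_cases σ <;> simp [traceEps, traceTensor, Fin.sum_univ_four, ηm] <;> ring
  · simp only [traceEps, traceTensor, LinearMap.coe_mk, AddHom.coe_mk, mul_sub, sum_sub_distrib]
    simp only [mul_left_comm (eps _ _ _ _), ← mul_sum, sum_ηm_mul, eps_apply_self_left,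
      eps_apply_self_mid]
    simp

theorem traceEps_epsTensor (w : Fin 4 → ℝ) : traceEps (epsTensor w) = (0, 6 • w) := by
  ext τ
  · simp [traceEps, epsTensor, sum_ηm_mul, eps_apply_self_left]
  · simp only [traceEps, epsTensor, LinearMap.coe_mk, AddHom.coe_mk]
    calc ∑ α, ∑ ρ, ∑ σ, eps α ρ σ τ * ∑ κ, eps α ρ σ κ * w κ
        = ∑ κ, (∑ α, ∑ ρ, ∑ σ, eps α ρ σ τ * eps α ρ σ κ) * w κ := by
          simp only [mul_sum, sum_mul, mul_assoc]
          conv_rhs => rw [sum_comm]; enter [2, α]; rw [sum_comm]; enter [2, ρ]; rw [sum_comm]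
      _ = (6 • w) τ := by simp [sum_eps_mul_eps]

theorem map_traceEps_skewTensors : (skewTensors ℝ (Fin 4) (Fin 4)).map traceEps = ⊤ := by
  refine eq_top_iff.mpr fun ⟨v, w⟩ _ => ?_
  refine ⟨traceTensor ((3 : ℝ)⁻¹ • v) + epsTensor ((6 : ℝ)⁻¹ • w),
    add_mem (traceTensor_mem _) (epsTensor_mem _), ?_⟩
  rw [map_add, traceEps_traceTensor, traceEps_epsTensor]
  ext <;> simp

/-- the space of Fierz tensors is a 16-dimensional real vector space. -/
theorem stmt16 :
    ∃ S : Submodule ℝ (Fin 4 → Fin 4 → Fin 4 → ℝ),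
      (S : Set (Fin 4 → Fin 4 → Fin 4 → ℝ)) = {F | IsFierz F} ∧
      Module.finrank ℝ S = 16 := by
  refine ⟨_, setOf_isFierz.symm, ?_⟩
  have h := finrank_inf_ker_add_finrank _ _ map_traceEps_skewTensors
  have hcard : Fintype.card {p : Fin 4 × Fin 4 // p.1 < p.2} = 6 := rfl
  rw [finrank_skewTensors, Fintype.card_fin, hcard, finrank_prod, finrank_fin_fun] at h
  omega
end
end
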